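/- arXiv:2404.00010 — 2 statements merged into one kernel-verified Lean document; each statement's English description precedes it below -/
import Mathlib

section
/- The map Log_𝟙 : M → ℝ³ defined by Log_𝟙(x) = (1/sinc(φ(x))) · [x₁, x₂, x₃]ᵀ, where φ(x) = wrap(arctan2(x₁, x₀)) and sinc(t) = sin(t)/t (with sinc(0)=1), is continuous on M = {x ∈ ℝ⁴ : x₀² + x₁² = 1}. -/
open Real

/-- Four-quadrant arctangent: `arctan2 y x ∈ (-π, π]` is the argument of `x + y i`. -/
noncomputable def arctan2 (y x : ℝ) : ℝ := Complex.arg (Complex.mk x y)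

/-- The angle-wrapping function mapping into `(-π/2, π/2]`. -/
noncomputable def wrap (α : ℝ) : ℝ :=
  if α ≤ -(π / 2) then α + π
  else if α > π / 2 then α - π
  else α

/-- `sinc t = sin t / t`, with `sinc 0 = 1`. -/
noncomputable def sinc (t : ℝ) : ℝ := if t = 0 then 1 else Real.sin t / t

/-- The rotation half-angle of a PUDQ. -/
noncomputable def phi (x : Fin 4 → ℝ) : ℝ := wrap (arctan2 (x 1) (x 0))

/-- The logarithm map at the identity, `Log_𝟙 : M → ℝ³`. -/
noncomputable def Log1 (x : Fin 4 → ℝ) : Fin 3 → ℝ :=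
  fun i => (1 / _root_.sinc (phi x)) * ![x 1, x 2, x 3] i

/-- The PUDQ manifold embedded in `ℝ⁴`. -/
def Mset : Set (Fin 4 → ℝ) := {x | x 0 ^ 2 + x 1 ^ 2 = 1}
/-! On `M` the point `x₀ + x₁ i` lies on the unit circle, so `sin (arctan2 x₁ x₀) = x₁`; wrapping
changes the angle by a multiple of `π`, which keeps `|sin|` and lands in `[-π/2, π/2]`. Hence
`|φ(x)| = arcsin |x₁|`, and since `sinc` is even, `sinc (φ x) = sinc (arcsin |x₁|)` on `M`: a
continuous function of `x` that never vanishes. -/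

theorem sinc_eq_real_sinc : _root_.sinc = Real.sinc := rfl

namespace Real

theorem sinc_abs (t : ℝ) : sinc |t| = sinc t := by
  rcases abs_choice t with h | h <;> simp [h]

theorem sinc_pos_of_abs_lt_pi {t : ℝ} (ht : |t| < π) : 0 < sinc t := by
  rcases eq_or_ne t 0 with rfl | h0
  · simp
  rw [← sinc_abs, sinc_of_ne_zero (abs_ne_zero.mpr h0)]
  exact div_pos (sin_pos_of_pos_of_lt_pi (abs_pos.mpr h0) ht) (abs_pos.mpr h0)

theorem sinc_arcsin_pos (y : ℝ) : 0 < sinc (arcsin y) :=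
  sinc_pos_of_abs_lt_pi <| (abs_le.mpr (arcsin_mem_Icc y)).trans_lt (by linarith [pi_pos])

theorem arcsin_abs_sin {w : ℝ} (hw : w ∈ Set.Icc (-(π / 2)) (π / 2)) :
    arcsin |sin w| = |w| := by
  have hw' : |w| ≤ π / 2 := abs_le.mpr hw
  rw [abs_sin_eq_sin_abs_of_abs_le_pi (by linarith [pi_pos]),
    arcsin_sin (by linarith [abs_nonneg w]) hw']

end Real

theorem abs_sin_wrap (θ : ℝ) : |Real.sin (wrap θ)| = |Real.sin θ| := by
  unfold wrap
  split_ifs <;> simp [Real.sin_add_pi, Real.sin_sub_pi]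

theorem wrap_mem_Icc {θ : ℝ} (h₁ : -(3 * π / 2) < θ) (h₂ : θ ≤ 3 * π / 2) :
    wrap θ ∈ Set.Icc (-(π / 2)) (π / 2) := by
  unfold wrap
  split_ifs <;> constructor <;> linarith

theorem abs_wrap_eq_arcsin_abs_sin {θ : ℝ} (h₁ : -(3 * π / 2) < θ) (h₂ : θ ≤ 3 * π / 2) :
    |wrap θ| = Real.arcsin |Real.sin θ| := by
  rw [← abs_sin_wrap, Real.arcsin_abs_sin (wrap_mem_Icc h₁ h₂)]

theorem sinc_phi_eq_sinc_arcsin {x : Fin 4 → ℝ} (hx : x ∈ Mset) :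
    _root_.sinc (phi x) = Real.sinc (Real.arcsin |x 1|) := by
  set z : ℂ := ⟨x 0, x 1⟩
  have hz : ‖z‖ = 1 := by
    rw [Complex.norm_def, Complex.normSq_mk, ← sq, ← sq, hx.out, Real.sqrt_one]
  have hθ₁ := Complex.neg_pi_lt_arg z
  have hθ₂ := Complex.arg_le_pi z
  rw [sinc_eq_real_sinc, ← Real.sinc_abs, phi, arctan2,
    abs_wrap_eq_arcsin_abs_sin (by linarith [pi_pos]) (by linarith [pi_pos]),
    Complex.sin_arg, hz, div_one]

theorem Log1_eqOn_Mset :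
    Set.EqOn Log1 (fun x i => (1 / Real.sinc (Real.arcsin |x 1|)) * ![x 1, x 2, x 3] i) Mset :=
  fun x hx => funext fun i => by rw [Log1, sinc_phi_eq_sinc_arcsin hx]

theorem Log1_continuousOn : ContinuousOn Log1 Mset := by
  refine (Continuous.continuousOn ?_).congr Log1_eqOn_Mset
  fun_prop (disch := exact fun x => (Real.sinc_arcsin_pos _).ne')
end

section
/- The function f₁(φ) = (sin(φ) - φ cos(φ)) / sin²(φ) satisfies |f₁(φ)| ≤ 1 for all φ ∈ (-π/2, π/2] with φ ≠ 0; moreover f₁(π/2) = 1. -/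
open Real

/-- `f₁(φ) = (sin φ - φ cos φ) / sin² φ`. -/
noncomputable def f1 (φ : ℝ) : ℝ := (Real.sin φ - φ * Real.cos φ) / Real.sin φ ^ 2

lemma f1_pos_bound (φ : ℝ) (h0 : 0 < φ) (h2 : φ ≤ π / 2) : |f1 φ| ≤ 1 := by
  have hφπ : φ < π := lt_of_le_of_lt h2 (by linarith [Real.pi_pos])
  have hs : 0 < Real.sin φ := Real.sin_pos_of_pos_of_lt_pi h0 hφπ
  have hc : 0 ≤ Real.cos φ := Real.cos_nonneg_of_mem_Icc ⟨by linarith, h2⟩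
  have hsq : 0 < Real.sin φ ^ 2 := by positivity
  have hsum : 1 ≤ Real.sin φ + Real.cos φ := by
    nlinarith [Real.sin_sq_add_cos_sq φ, hs.le, hc]
  have hle : Real.sin φ ≤ φ := Real.sin_le h0.le
  -- lower bound : φ cos φ ≤ sin φ
  have hlow : φ * Real.cos φ ≤ Real.sin φ := by
    rcases lt_or_eq_of_le h2 with h2' | h2'
    · have ht := Real.lt_tan h0 h2'
      have hcpos : 0 < Real.cos φ := Real.cos_pos_of_mem_Ioo ⟨by linarith, h2'⟩
      rw [Real.tan_eq_sin_div_cos, lt_div_iff₀ hcpos] at ht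
      linarith
    · rw [h2', Real.sin_pi_div_two, Real.cos_pi_div_two]
      nlinarith [Real.pi_pos]
  -- upper bound : sin φ - φ cos φ ≤ sin² φ
  have hup : Real.sin φ - φ * Real.cos φ ≤ Real.sin φ ^ 2 := by
    nlinarith [mul_nonneg hs.le (sub_nonneg.mpr hsum), mul_nonneg hc (sub_nonneg.mpr hle)]
  rw [f1, abs_div, abs_of_pos hsq, div_le_one hsq,
    abs_of_nonneg (by linarith : (0:ℝ) ≤ Real.sin φ - φ * Real.cos φ)]
  exact hup

lemma f1_neg (φ : ℝ) : f1 (-φ) = - f1 φ := by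
  simp [f1, neg_div]
  ring_nf

theorem f1_bound :
    (∀ φ ∈ Set.Ioc (-(π / 2)) (π / 2), φ ≠ 0 → |f1 φ| ≤ 1) ∧
    f1 (π / 2) = 1 := by
  constructor
  · rintro φ ⟨h1, h2⟩ hne
    rcases lt_or_gt_of_ne hne with hneg | hpos
    · have := f1_pos_bound (-φ) (by linarith) (by linarith)
      rwa [f1_neg, abs_neg] at this
    · exact f1_pos_bound φ hpos h2
  · simp [f1]
end
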